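/- Let H_1 be an r_1-regular graph and suppose m − 1 = p(r_1 − 1) for some integer p, where p ≥ 3 and r_1 ≥ 2. Let G = G[F,V_k,H_v] and G* = G[F,V_k,H_v*] with |V_k| = k, where H_v* is the graph H_v whose deleted graph H_1 is replaced by G_p^{r_1} = C_p □ K_{r_1−1}. Let γ, δ be the two roots of (x − 2r_1 − 1)(x − m + 1) − (m − 1) = 0. Then the multiset σ(Q(G)) equals the union of: (a) each q ∈ σ(Q(H_v)) \ {γ, δ} taken with multiplicity k, and (b) the multiset obtained from σ(Q(G*)) by removing k copies of each value q_j(G_p^{r_1}) + 1, j = 1,…,m−2. -/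

import Mathlib

open Matrix BigOperators
open scoped Classical

/-- The adjacency matrix of a simple graph, with entries in `R`. -/
noncomputable def adjMat (R : Type*) [Zero R] [One R] {V : Type*} [Fintype V]
    (G : SimpleGraph V) : Matrix V V R :=
  Matrix.of fun x y => if G.Adj x y then (1 : R) else 0

/-- The degree of a vertex. -/
noncomputable def gdeg {V : Type*} [Fintype V] (G : SimpleGraph V) (x : V) : ℕ :=
  (Finset.univ.filter fun y => G.Adj x y).card

/-- `G` is `r`-regular. -/
def IsReg {V : Type*} [Fintype V] (G : SimpleGraph V) (r : ℕ) : Prop :=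
  ∀ x, gdeg G x = r

/-- The signless Laplacian matrix `Q(G) = D(G) + A(G)`. -/
noncomputable def qMat (R : Type*) [AddMonoidWithOne R] {V : Type*} [Fintype V]
    (G : SimpleGraph V) : Matrix V V R :=
  Matrix.diagonal (fun x => (gdeg G x : R)) + adjMat R G

/-- The adjacency spectrum, as the multiset of real roots (with multiplicity) of the
characteristic polynomial of the (real symmetric) adjacency matrix. -/
noncomputable def aSpec {V : Type*} [Fintype V] (G : SimpleGraph V) : Multiset ℝ :=
  (adjMat ℝ G).charpoly.roots

/-- The signless Laplacian spectrum. -/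
noncomputable def qSpec {V : Type*} [Fintype V] (G : SimpleGraph V) : Multiset ℝ :=
  (qMat ℝ G).charpoly.roots

/-- The `M`-coronal `Γ_M(x) = 1ᵀ (xI − M)⁻¹ 1`, the sum of the entries of `(xI − M)⁻¹`. -/
noncomputable def coronal {n R : Type*} [Fintype n] [DecidableEq n] [Field R]
    (M : Matrix n n R) (x : R) : R :=
  ∑ i, ∑ j, ((x • (1 : Matrix n n R) - M)⁻¹) i j

/-- Embeds a `P × P` matrix as a `V × V` matrix supported on the image of `g`, zero elsewhere.
If the vertices of `V` are ordered listing the image of `g` first, this is `diag(M, 0)`. -/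
noncomputable def embedMatrix {P V R : Type*} [Fintype P] [AddCommMonoid R]
    (g : P → V) (M : Matrix P P R) : Matrix V V R :=
  Matrix.of fun x y => ∑ px : P, ∑ py : P, if x = g px ∧ y = g py then M px py else 0

/-- The graph `H − v` obtained by deleting the vertex `v`. -/
def delVert {W : Type*} (H : SimpleGraph W) (v : W) : SimpleGraph {w : W // w ≠ v} :=
  H.comap Subtype.val

/-- The graph `H − {u,v}` obtained by deleting the two vertices `u, v`. -/
def delVert2 {W : Type*} (H : SimpleGraph W) (u v : W) :
    SimpleGraph {w : W // w ≠ u ∧ w ≠ v} :=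
  H.comap Subtype.val

/-- The join `G₁ ∨ G₂` of two vertex-disjoint graphs: their disjoint union together with all
edges between the two parts. -/
def sgJoin {α β : Type*} (G₁ : SimpleGraph α) (G₂ : SimpleGraph β) : SimpleGraph (α ⊕ β) where
  Adj x y :=
    match x, y with
    | Sum.inl a, Sum.inl b => G₁.Adj a b
    | Sum.inl _, Sum.inr _ => True
    | Sum.inr _, Sum.inl _ => True
    | Sum.inr a, Sum.inr b => G₂.Adj a b
  symm := by
    constructor
    rintro (a | a) (b | b) h
    · exact G₁.adj_symm h
    · trivial
    · trivial
    · exact G₂.adj_symm h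
  loopless := by
    constructor
    rintro (a | a) h
    · exact G₁.loopless.irrefl a h
    · exact G₂.loopless.irrefl a h

/-- The graph `G[F, V_k, H_v]` with `k` pockets: take one copy of `F` and `k` disjoint copies
of `H` (with specified vertex `v`), identifying the vertex `v` of the `i`-th copy with the
vertex `f i` of `F`.  The `i`-th copy of `H − v` is carried by `{i} × {w // w ≠ v}`. -/
def pocketGraph {V W : Type*} (F : SimpleGraph V) (H : SimpleGraph W) (v : W)
    {k : ℕ} (f : Fin k ↪ V) : SimpleGraph (V ⊕ (Fin k × {w : W // w ≠ v})) where
  Adj x y :=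
    match x, y with
    | Sum.inl a, Sum.inl b => F.Adj a b
    | Sum.inl a, Sum.inr (i, w) => a = f i ∧ H.Adj v w.1
    | Sum.inr (i, w), Sum.inl a => a = f i ∧ H.Adj v w.1
    | Sum.inr (i, w), Sum.inr (j, w') => i = j ∧ H.Adj w.1 w'.1
  symm := by
    constructor
    rintro (a | ⟨i, w⟩) (b | ⟨j, w'⟩) h
    · exact F.adj_symm h
    · exact h
    · exact h
    · exact ⟨h.1.symm, H.adj_symm h.2⟩
  loopless := by
    constructor
    rintro (a | ⟨i, w⟩) h
    · exact F.loopless.irrefl a h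
    · exact H.loopless.irrefl _ h.2

/-- The graph `G[F, E_k, H_{uv}]` with `k` edge-pockets: take one copy of `F` and `k` disjoint
copies of `H` (with specified edge `uv`), pasting the edge `uv` of the `i`-th copy onto the
edge `e_i = (a i)(b i)` of `F` (identifying `u` with `a i` and `v` with `b i`).  The `i`-th
copy of `H − {u,v}` is carried by `{i} × {w // w ≠ u ∧ w ≠ v}`. -/
def edgePocketGraph {V W : Type*} (F : SimpleGraph V) (H : SimpleGraph W) (u v : W)
    {k : ℕ} (a b : Fin k → V) :
    SimpleGraph (V ⊕ (Fin k × {w : W // w ≠ u ∧ w ≠ v})) where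
  Adj x y :=
    match x, y with
    | Sum.inl s, Sum.inl t => F.Adj s t
    | Sum.inl s, Sum.inr (i, w) => (s = a i ∧ H.Adj u w.1) ∨ (s = b i ∧ H.Adj v w.1)
    | Sum.inr (i, w), Sum.inl s => (s = a i ∧ H.Adj u w.1) ∨ (s = b i ∧ H.Adj v w.1)
    | Sum.inr (i, w), Sum.inr (j, w') => i = j ∧ H.Adj w.1 w'.1
  symm := by
    constructor
    rintro (s | ⟨i, w⟩) (t | ⟨j, w'⟩) h
    · exact F.adj_symm h
    · exact h
    · exact h
    · exact ⟨h.1.symm, H.adj_symm h.2⟩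
  loopless := by
    constructor
    rintro (s | ⟨i, w⟩) h
    · exact F.loopless.irrefl s h
    · exact H.loopless.irrefl _ h.2

open Polynomial
open scoped Kronecker

/-!
Write `c = m - 1` for the size of a pocket, `s = 2r₁ + 1`, and `B = Q(H₁) + I` for the block of
`Q(G)` on one pocket. As `v` is adjacent to every vertex of `H₁` and `H₁` is `r₁`-regular, `B` has
constant row sums `s`, so the coronal of `B` is `c / (x - s)`. A Schur complement over the `k`
pocket blocks therefore gives `φ(Q(G)) · (x - s)^k = P · φ(B)^k`, where `P` is the characteristic
polynomial of the quotient matrix of the partition of `G` into the vertices of `F` and the pockets;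
`P` depends on `H_v` only through `m` and `r₁`, so it is the same for `G` and `G*`. Since `s` is a
root of `φ(B)`, the spectrum of `G` is `σ(P)` plus `k` copies of `σ(B) ∖ {s}`. For the single pocket
over `K₁`, which is `H_v` itself, `P = (x - γ)(x - δ)`; for `H_v*`, `σ(B*) = σ(Q(G_p^{r₁})) + 1`.
-/

section GraphMatrices

variable {V V' : Type*} [Fintype V] [Fintype V']

lemma gdeg_eq_degree (G : SimpleGraph V) (x : V) [Fintype (G.neighborSet x)] :
    gdeg G x = G.degree x := by
  rw [← SimpleGraph.card_neighborSet_eq_degree, gdeg, ← Set.toFinset_card]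
  congr 1
  ext
  simp

lemma IsReg.of_iso {G : SimpleGraph V} {G' : SimpleGraph V'} {r : ℕ} (h : IsReg G r)
    (e : G ≃g G') : IsReg G' r := by
  intro x
  rw [gdeg_eq_degree, ← e.apply_symm_apply x, e.degree_eq, ← gdeg_eq_degree, h]

lemma isReg_cycleGraph_boxProd_top {p r : ℕ} (hp : 3 ≤ p) (hr : 2 ≤ r) :
    IsReg ((SimpleGraph.cycleGraph p).boxProd (⊤ : SimpleGraph (Fin (r - 1)))) r := by
  obtain ⟨p, rfl⟩ : ∃ n, p = n + 3 := ⟨p - 3, by omega⟩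
  intro x
  rw [gdeg_eq_degree, SimpleGraph.degree_boxProd, SimpleGraph.cycleGraph_degree_three_le,
    SimpleGraph.complete_graph_degree, Fintype.card_fin]
  omega

lemma cast_gdeg_eq_sum_adjMat (G : SimpleGraph V) (x : V) :
    (gdeg G x : ℝ) = ∑ y, adjMat ℝ G x y := by
  simp [adjMat, gdeg, Finset.sum_boole]

lemma sum_qMat_apply (G : SimpleGraph V) (x : V) : ∑ y, qMat ℝ G x y = 2 * gdeg G x := by
  simp only [qMat, Matrix.add_apply, diagonal_apply, Finset.sum_add_distrib, Finset.sum_ite_eq,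
    Finset.mem_univ, ↓reduceIte, ← cast_gdeg_eq_sum_adjMat]
  ring

lemma sum_qMat_add_one_apply [DecidableEq V] {G : SimpleGraph V} {r : ℕ} (hreg : IsReg G r)
    (x : V) : ∑ y, (qMat ℝ G + 1) x y = 2 * r + 1 := by
  simp [Finset.sum_add_distrib, sum_qMat_apply, one_apply, hreg x]

lemma qMat_eq_submatrix_of_iso {G : SimpleGraph V} {G' : SimpleGraph V'} (e : G ≃g G') :
    qMat ℝ G = (qMat ℝ G').submatrix e e := by
  ext x y
  simp [qMat, adjMat, diagonal_apply, gdeg_eq_degree, e.map_adj_iff]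

lemma qSpec_eq_roots_charpoly [DecidableEq V] (G : SimpleGraph V) :
    qSpec G = (qMat ℝ G).charpoly.roots := by
  unfold qSpec
  congr!

lemma qSpec_eq_of_iso [DecidableEq V] [DecidableEq V'] {G : SimpleGraph V}
    {G' : SimpleGraph V'} (e : G ≃g G') : qSpec G = qSpec G' := by
  rw [qSpec_eq_roots_charpoly, qSpec_eq_roots_charpoly, qMat_eq_submatrix_of_iso e,
    ← charpoly_reindex e.toEquiv.symm]
  rfl

end GraphMatrices

lemma Polynomial.eq_of_eval_eq_of_not_isRoot {p q r : ℝ[X]} (hr : r ≠ 0)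
    (h : ∀ x, ¬ r.IsRoot x → p.eval x = q.eval x) : p = q :=
  eq_of_infinite_eval_eq p q <|
    ((finite_setOfPred_isRoot hr).infinite_compl).mono fun x hx => h x hx

lemma Polynomial.roots_eq_of_mul_pow_eq {p P D : ℝ[X]} {s : ℝ} {k : ℕ} (hp : p ≠ 0)
    (hD : D ≠ 0) (hs : D.IsRoot s) (h : p * (X - C s) ^ k = P * D ^ k) :
    p.roots = P.roots + k • D.roots.erase s := by
  obtain ⟨g, rfl⟩ := dvd_iff_isRoot.mpr hs
  have hpg : p = P * g ^ k := by
    refine mul_right_cancel₀ (pow_ne_zero k (X_sub_C_ne_zero s)) ?_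
    rw [h, mul_pow]
    ring
  rw [roots_mul hD, roots_X_sub_C, Multiset.singleton_add, Multiset.erase_cons_head, hpg,
    roots_mul (hpg ▸ hp), roots_pow]

section RowSums

variable {n : Type*} [Fintype n] [DecidableEq n]

lemma Matrix.eval_charpoly_eq_det (M : Matrix n n ℝ) (x : ℝ) :
    M.charpoly.eval x = det (x • 1 - M) := by
  rw [eval_charpoly, scalar_apply, smul_one_eq_diagonal]

lemma smul_one_sub_mulVec_one {M : Matrix n n ℝ} {s : ℝ} (hM : ∀ i, ∑ j, M i j = s) (x : ℝ) :
    (x • 1 - M) *ᵥ 1 = (x - s) • 1 := by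
  ext i
  simp [mulVec, dotProduct, one_apply, Finset.sum_sub_distrib, hM]

lemma coronal_eq_of_sum_eq {M : Matrix n n ℝ} {s x : ℝ} (hM : ∀ i, ∑ j, M i j = s)
    (hx : x ≠ s) (hdet : IsUnit (x • 1 - M).det) :
    coronal M x = Fintype.card n / (x - s) := by
  have hinv : (x • 1 - M)⁻¹ *ᵥ 1 = (x - s)⁻¹ • 1 := by
    have := congrArg ((x • 1 - M)⁻¹ *ᵥ ·) (smul_one_sub_mulVec_one hM x)
    simp only [mulVec_mulVec, nonsing_inv_mul _ hdet, one_mulVec, mulVec_smul] at this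
    conv_rhs => rw [this, smul_smul, inv_mul_cancel₀ (sub_ne_zero.mpr hx), one_smul]
  have hrow : ∀ i, ∑ j, (x • 1 - M)⁻¹ i j = (x - s)⁻¹ := by
    intro i
    simpa [mulVec, dotProduct] using congrFun hinv i
  simp [coronal, hrow, div_eq_mul_inv]

lemma isRoot_charpoly_of_sum_eq [Nonempty n] {M : Matrix n n ℝ} {s : ℝ}
    (hM : ∀ i, ∑ j, M i j = s) : M.charpoly.IsRoot s := by
  rw [IsRoot, eval_charpoly_eq_det, ← exists_mulVec_eq_zero_iff]
  refine ⟨1, one_ne_zero, ?_⟩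
  rw [smul_one_sub_mulVec_one hM, sub_self, zero_smul]

end RowSums

lemma roots_charpoly_add_one {n : Type*} [Fintype n] [DecidableEq n] (M : Matrix n n ℝ) :
    (M + 1).charpoly.roots = M.charpoly.roots.map (· + 1) := by
  rw [show M + 1 = M - scalar n (-1 : ℝ) by simp [sub_eq_add_neg], charpoly_sub_scalar,
    show (X + C (-1 : ℝ)) = C 1 * X + C (-1) by simp,
    roots_comp_C_mul_X_add_C _ _ _ isUnit_one]
  simp

lemma roots_charpoly_qMat_add_one_of_iso {V V' : Type*} [Fintype V] [DecidableEq V] [Fintype V']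
    [DecidableEq V'] {G : SimpleGraph V} {G' : SimpleGraph V'} (e : G ≃g G') :
    (qMat ℝ G + 1).charpoly.roots = (qSpec G').map (· + 1) := by
  rw [roots_charpoly_add_one, ← qSpec_eq_roots_charpoly, qSpec_eq_of_iso e]

lemma smul_one_sub_fromBlocks {m n : Type*} [DecidableEq m] [DecidableEq n] (x : ℝ)
    (A : Matrix m m ℝ) (B : Matrix m n ℝ) (C : Matrix n m ℝ) (D : Matrix n n ℝ) :
    x • 1 - fromBlocks A B C D = fromBlocks (x • 1 - A) (-B) (-C) (x • 1 - D) := by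
  rw [← fromBlocks_one, fromBlocks_smul, sub_eq_add_neg, fromBlocks_neg, fromBlocks_add]
  simp [sub_eq_add_neg]

lemma smul_one_sub_one_kronecker {ι n : Type*} [DecidableEq ι] [DecidableEq n] (x : ℝ)
    (B : Matrix n n ℝ) : x • 1 - (1 : Matrix ι ι ℝ) ⊗ₖ B = 1 ⊗ₖ (x • 1 - B) := by
  ext ⟨i, a⟩ ⟨j, b⟩
  by_cases hij : i = j <;> by_cases hab : a = b <;> simp [one_apply, hij, hab]

section PocketMatrices

variable {V ι n : Type*} [DecidableEq V]

def attachMat (f : ι → V) : Matrix V ι ℝ :=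
  of fun a i => if a = f i then 1 else 0

def pocketAttachMat (f : ι → V) (n : Type*) : Matrix V (ι × n) ℝ :=
  of fun a q => attachMat f a q.1

variable [Fintype ι]

lemma attachMat_mul_transpose_apply (f : ι → V) (a b : V) :
    (attachMat f * (attachMat f)ᵀ) a b = if a = b then ∑ i, attachMat f a i else 0 := by
  rw [mul_apply]
  split_ifs with hab
  · subst hab
    exact Finset.sum_congr rfl fun i _ => by simp [attachMat]
  · exact Finset.sum_eq_zero fun i _ => by
      simp only [attachMat, of_apply, transpose_apply]
      split_ifs <;> simp_all

variable [DecidableEq ι] [Fintype n]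

lemma pocketAttachMat_mul_one_kronecker_mul_transpose (f : ι → V) (M : Matrix n n ℝ) :
    pocketAttachMat f n * ((1 : Matrix ι ι ℝ) ⊗ₖ M) * (pocketAttachMat f n)ᵀ
      = (∑ i, ∑ j, M i j) • (attachMat f * (attachMat f)ᵀ) := by
  have hrow : ∀ a q, (pocketAttachMat f n * ((1 : Matrix ι ι ℝ) ⊗ₖ M)) a q
      = attachMat f a q.1 * ∑ w, M w q.2 := by
    rintro a ⟨i, w'⟩
    simp [mul_apply, Fintype.sum_prod_type, one_apply, pocketAttachMat, Finset.mul_sum]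
  ext a b
  rw [mul_apply]
  simp only [hrow]
  rw [Fintype.sum_prod_type]
  simp only [pocketAttachMat, of_apply, transpose_apply, Matrix.smul_apply, smul_eq_mul,
    mul_apply, Finset.mul_sum, Finset.sum_mul]
  refine Finset.sum_congr rfl fun i _ => ?_
  rw [Finset.sum_comm]
  exact Finset.sum_congr rfl fun _ _ => Finset.sum_congr rfl fun _ _ => by ring

variable [Fintype V] [DecidableEq n]

lemma det_fromBlocks_pocketAttachMat (f : ι → V) (A : Matrix V V ℝ) (N : Matrix n n ℝ)
    (hN : IsUnit N.det) :
    det (fromBlocks A (-pocketAttachMat f n) (-(pocketAttachMat f n)ᵀ) (1 ⊗ₖ N))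
      = N.det ^ Fintype.card ι
        * det (A - (∑ i, ∑ j, N⁻¹ i j) • (attachMat f * (attachMat f)ᵀ)) := by
  have : IsUnit ((1 : Matrix ι ι ℝ) ⊗ₖ N).det := by
    simpa [det_kronecker] using hN.pow _
  let := invertibleOfIsUnitDet _ this
  rw [det_fromBlocks₂₂, invOf_eq_nonsing_inv, inv_kronecker, inv_one, Matrix.neg_mul,
    Matrix.mul_neg, Matrix.neg_mul, neg_neg, pocketAttachMat_mul_one_kronecker_mul_transpose,
    det_kronecker]
  simp

/-- The quotient matrix of `Q(G[F, V_k, H_v])` for the partition into the vertices of `F` and the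
pockets, when `A = Q(F)`, every pocket has `c` vertices and `Q(H_v − v) + I` has row sums `s`. -/
def pocketQuotient (A : Matrix V V ℝ) (f : ι → V) (c s : ℝ) : Matrix (V ⊕ ι) (V ⊕ ι) ℝ :=
  fromBlocks (A + c • (attachMat f * (attachMat f)ᵀ)) (c • attachMat f) (attachMat f)ᵀ (s • 1)

lemma det_smul_one_sub_pocketQuotient (A : Matrix V V ℝ) (f : ι → V) {c s x : ℝ} (hx : x ≠ s) :
    det (x • 1 - pocketQuotient A f c s)
      = (x - s) ^ Fintype.card ι
        * det (x • 1 - A - (c + c / (x - s)) • (attachMat f * (attachMat f)ᵀ)) := by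
  have hxs : x - s ≠ 0 := sub_ne_zero.mpr hx
  let : Invertible ((x - s) • (1 : Matrix ι ι ℝ)) :=
    invertibleOfLeftInverse _ ((x - s)⁻¹ • 1) (by simp [smul_smul, mul_inv_cancel₀ hxs])
  rw [pocketQuotient, smul_one_sub_fromBlocks, ← sub_smul, det_fromBlocks₂₂, det_smul, det_one,
    mul_one, show ⅟((x - s) • (1 : Matrix ι ι ℝ)) = (x - s)⁻¹ • 1 from rfl]
  congr 2
  simp only [Matrix.neg_mul, Matrix.mul_neg, Matrix.smul_mul, Matrix.mul_smul, Matrix.mul_one]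
  module

end PocketMatrices

section PocketGraph

variable {V W : Type*} [Fintype V] [DecidableEq V] [Fintype W] [DecidableEq W]
  (F : SimpleGraph V) {H : SimpleGraph W} {v : W} {k : ℕ} (f : Fin k ↪ V)

lemma adjMat_pocketGraph (hdeg : ∀ w, w ≠ v → H.Adj v w) :
    adjMat ℝ (pocketGraph F H v f)
      = fromBlocks (adjMat ℝ F) (pocketAttachMat f _) (pocketAttachMat f _)ᵀ
          (1 ⊗ₖ adjMat ℝ (delVert H v)) := by
  ext (a | ⟨i, w, hw⟩) (b | ⟨j, w', hw'⟩)
  · rfl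
  · simp [adjMat, pocketGraph, pocketAttachMat, attachMat, hdeg w' hw']
  · simp [adjMat, pocketGraph, pocketAttachMat, attachMat, hdeg w hw]
  · by_cases hij : i = j <;> simp [adjMat, pocketGraph, delVert, one_apply, hij]

lemma cast_gdeg_pocketGraph_inl (hdeg : ∀ w, w ≠ v → H.Adj v w) (a : V) :
    (gdeg (pocketGraph F H v f) (.inl a) : ℝ)
      = gdeg F a + Fintype.card {w // w ≠ v} * ∑ i, attachMat f a i := by
  simp [cast_gdeg_eq_sum_adjMat, adjMat_pocketGraph F f hdeg, Fintype.sum_sum_type,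
    Fintype.sum_prod_type, pocketAttachMat, Finset.mul_sum]

lemma cast_gdeg_pocketGraph_inr (hdeg : ∀ w, w ≠ v → H.Adj v w) (q : Fin k × {w // w ≠ v}) :
    (gdeg (pocketGraph F H v f) (.inr q) : ℝ) = gdeg (delVert H v) q.2 + 1 := by
  simp [cast_gdeg_eq_sum_adjMat, adjMat_pocketGraph F f hdeg, Fintype.sum_sum_type,
    Fintype.sum_prod_type, pocketAttachMat, attachMat, one_apply, add_comm]

lemma qMat_pocketGraph (hdeg : ∀ w, w ≠ v → H.Adj v w) :
    qMat ℝ (pocketGraph F H v f)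
      = fromBlocks (qMat ℝ F + (Fintype.card {w // w ≠ v} : ℝ) • (attachMat f * (attachMat f)ᵀ))
          (pocketAttachMat f _) (pocketAttachMat f _)ᵀ (1 ⊗ₖ (qMat ℝ (delVert H v) + 1)) := by
  rw [qMat, adjMat_pocketGraph F f hdeg]
  ext (a | ⟨i, w⟩) (b | ⟨j, w'⟩)
  · by_cases hab : a = b <;>
      simp [hab, qMat, cast_gdeg_pocketGraph_inl F f hdeg, attachMat_mul_transpose_apply,
        add_right_comm]
  · simp
  · simp
  · by_cases hij : i = j <;> by_cases hw : w = w' <;>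
      simp [hij, hw, qMat, one_apply, cast_gdeg_pocketGraph_inr F f hdeg, add_right_comm]

variable {r : ℕ}

lemma det_smul_one_sub_qMat_pocketGraph (hdeg : ∀ w, w ≠ v → H.Adj v w)
    (hreg : IsReg (delVert H v) r) {x : ℝ} (hx : x ≠ 2 * r + 1)
    (hdet : IsUnit (x • 1 - (qMat ℝ (delVert H v) + 1)).det) :
    det (x • 1 - qMat ℝ (pocketGraph F H v f))
      = det (x • 1 - (qMat ℝ (delVert H v) + 1)) ^ k
        * det (x • 1 - qMat ℝ F - ((Fintype.card {w // w ≠ v} : ℝ)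
            + Fintype.card {w // w ≠ v} / (x - (2 * r + 1))) • (attachMat f * (attachMat f)ᵀ)) := by
  rw [qMat_pocketGraph F f hdeg, smul_one_sub_fromBlocks, smul_one_sub_one_kronecker,
    det_fromBlocks_pocketAttachMat _ _ _ hdet, Fintype.card_fin,
    show ∑ i, ∑ j, (x • 1 - (qMat ℝ (delVert H v) + 1))⁻¹ i j = coronal _ x from rfl,
    coronal_eq_of_sum_eq (sum_qMat_add_one_apply hreg) hx hdet, add_smul]
  congr 2
  abel

lemma charpoly_qMat_pocketGraph_mul (hdeg : ∀ w, w ≠ v → H.Adj v w)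
    (hreg : IsReg (delVert H v) r) :
    (qMat ℝ (pocketGraph F H v f)).charpoly * (X - C (2 * r + 1 : ℝ)) ^ k
      = (pocketQuotient (qMat ℝ F) f (Fintype.card {w // w ≠ v}) (2 * r + 1)).charpoly
        * (qMat ℝ (delVert H v) + 1).charpoly ^ k := by
  refine eq_of_eval_eq_of_not_isRoot (mul_ne_zero (X_sub_C_ne_zero (2 * r + 1 : ℝ))
    (charpoly_monic (qMat ℝ (delVert H v) + 1)).ne_zero) fun x hx => ?_
  simp only [IsRoot, eval_mul, eval_sub, eval_X, eval_C, mul_eq_zero, not_or,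
    eval_charpoly_eq_det, sub_eq_zero] at hx
  simp only [eval_mul, eval_pow, eval_sub, eval_X, eval_C, eval_charpoly_eq_det]
  rw [det_smul_one_sub_qMat_pocketGraph F f hdeg hreg hx.1 (Ne.isUnit hx.2),
    det_smul_one_sub_pocketQuotient _ _ hx.1, Fintype.card_fin]
  ring

theorem qSpec_pocketGraph [Nontrivial W] (hdeg : ∀ w, w ≠ v → H.Adj v w)
    (hreg : IsReg (delVert H v) r) :
    qSpec (pocketGraph F H v f)
      = (pocketQuotient (qMat ℝ F) f (Fintype.card {w // w ≠ v}) (2 * r + 1)).charpoly.roots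
        + k • (qMat ℝ (delVert H v) + 1).charpoly.roots.erase (2 * r + 1) := by
  have : Nonempty {w // w ≠ v} := nonempty_subtype.mpr (exists_ne v)
  rw [qSpec_eq_roots_charpoly]
  exact roots_eq_of_mul_pow_eq (charpoly_monic _).ne_zero (charpoly_monic _).ne_zero
    (isRoot_charpoly_of_sum_eq (sum_qMat_add_one_apply hreg))
    (charpoly_qMat_pocketGraph_mul F f hdeg hreg)

end PocketGraph

section SinglePocket

variable {W : Type*} [Fintype W] [DecidableEq W] {H : SimpleGraph W} {v : W}

def pocketGraphBotIso :
    pocketGraph (⊥ : SimpleGraph Unit) H v (Equiv.ofUnique (Fin 1) Unit).toEmbedding ≃g H where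
  toEquiv := (Equiv.sumCongr (Equiv.refl Unit) (Equiv.uniqueProd _ (Fin 1))).trans <|
    (Equiv.sumComm _ _).trans <| (Equiv.optionEquivSumPUnit.{0} _).symm.trans <|
      Equiv.optionSubtypeNe v
  map_rel_iff' {a b} := by
    rcases a with ⟨⟩ | ⟨i, w⟩ <;> rcases b with ⟨⟩ | ⟨j, w'⟩ <;>
      simp [pocketGraph, SimpleGraph.adj_comm, Fin.fin_one_eq_zero]

lemma charpoly_pocketQuotient_bot {c s γ δ : ℝ}
    (h : ∀ x : ℝ, (x - s) * (x - c) - c = (x - γ) * (x - δ)) :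
    (pocketQuotient (qMat ℝ (⊥ : SimpleGraph Unit)) (Equiv.ofUnique (Fin 1) Unit).toEmbedding
      c s).charpoly = (X - C γ) * (X - C δ) := by
  have hQ : qMat ℝ (⊥ : SimpleGraph Unit) = 0 := by
    ext
    simp [qMat, gdeg, adjMat]
  have hE : attachMat (Equiv.ofUnique (Fin 1) Unit).toEmbedding
      * (attachMat (Equiv.ofUnique (Fin 1) Unit).toEmbedding)ᵀ = 1 := by
    ext
    simp [attachMat, mul_apply]
  refine eq_of_eval_eq_of_not_isRoot (X_sub_C_ne_zero s) fun x hx => ?_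
  have hxs : x - s ≠ 0 := by simpa [sub_eq_zero] using hx
  rw [eval_charpoly_eq_det, det_smul_one_sub_pocketQuotient _ _ (sub_ne_zero.mp hxs), hQ, hE,
    sub_zero, ← sub_smul, det_smul, det_one, Fintype.card_unique, Fintype.card_unique, pow_one,
    pow_one, mul_one, eval_mul, eval_sub, eval_sub, eval_X, eval_C, eval_C, ← h x]
  field_simp
  ring

theorem qSpec_eq_cons_cons [Nontrivial W] {r : ℕ} (hdeg : ∀ w, w ≠ v → H.Adj v w)
    (hreg : IsReg (delVert H v) r) {γ δ : ℝ}
    (hγδ : ∀ x : ℝ, (x - (2 * r + 1)) * (x - Fintype.card {w // w ≠ v})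
      - Fintype.card {w // w ≠ v} = (x - γ) * (x - δ)) :
    qSpec H = γ ::ₘ δ ::ₘ (qMat ℝ (delVert H v) + 1).charpoly.roots.erase (2 * r + 1) := by
  rw [← qSpec_eq_of_iso pocketGraphBotIso, qSpec_pocketGraph _ _ hdeg hreg,
    charpoly_pocketQuotient_bot hγδ,
    roots_mul (mul_ne_zero (X_sub_C_ne_zero γ) (X_sub_C_ne_zero δ)), roots_X_sub_C,
    roots_X_sub_C, one_nsmul, Multiset.singleton_add, Multiset.cons_add, Multiset.singleton_add]

end SinglePocket

section Join

variable {β : Type*} (G : SimpleGraph β)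

def subtypeNeInlUnitEquiv : {w : Unit ⊕ β // w ≠ .inl ()} ≃ β where
  toFun
    | ⟨.inl (), h⟩ => absurd rfl h
    | ⟨.inr b, _⟩ => b
  invFun b := ⟨.inr b, Sum.inr_ne_inl⟩
  left_inv := by
    rintro ⟨⟨⟩ | b, h⟩
    exacts [absurd rfl h, rfl]
  right_inv _ := rfl

def delVertSgJoinIso : delVert (sgJoin (⊤ : SimpleGraph Unit) G) (.inl ()) ≃g G where
  toEquiv := subtypeNeInlUnitEquiv
  map_rel_iff' {a b} := by
    obtain ⟨⟨⟩ | a, ha⟩ := a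
    · exact absurd rfl ha
    obtain ⟨⟨⟩ | b, hb⟩ := b
    · exact absurd rfl hb
    rfl

lemma sgJoin_adj_inl_of_ne (w : Unit ⊕ β) (hw : w ≠ .inl ()) :
    (sgJoin (⊤ : SimpleGraph Unit) G).Adj (.inl ()) w := by
  obtain ⟨⟩ | b := w
  · exact absurd rfl hw
  · trivial

end Join

theorem signlessLap_spec_pocketGraph_vs_cycleCompleteModel_general
    {V W : Type*} [Fintype V] [Fintype W] [DecidableEq W]
    (m k p r₁ : ℕ) (hm : Fintype.card W = m) (hp : 3 ≤ p) (hr₁ : 2 ≤ r₁)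
    (hmp : m - 1 = p * (r₁ - 1))
    (F : SimpleGraph V) (H : SimpleGraph W) (v : W)
    (hdeg : ∀ w : W, w ≠ v → H.Adj v w)
    (hreg : IsReg (delVert H v) r₁)
    (f : Fin k ↪ V)
    (γ δ : ℝ)
    (hγδ : ∀ x : ℝ,
      (x - (2 * (r₁ : ℝ) + 1)) * (x - ((m : ℝ) - 1)) - ((m : ℝ) - 1) = (x - γ) * (x - δ)) :
    qSpec (pocketGraph F H v f)
      = k • (((qSpec H).erase γ).erase δ)
        + (qSpec (pocketGraph F
              (sgJoin (⊤ : SimpleGraph Unit)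
                ((SimpleGraph.cycleGraph p).boxProd (⊤ : SimpleGraph (Fin (r₁ - 1)))))
              (Sum.inl ()) f)
            - k • (((qSpec ((SimpleGraph.cycleGraph p).boxProd
                (⊤ : SimpleGraph (Fin (r₁ - 1))))).erase (2 * (r₁ : ℝ))).map
                  fun q => q + 1)) := by
  classical
  set Gp := (SimpleGraph.cycleGraph p).boxProd (⊤ : SimpleGraph (Fin (r₁ - 1)))
  have hpr : 3 ≤ p * (r₁ - 1) := Nat.mul_le_mul hp (by omega : 1 ≤ r₁ - 1)
  have hcard : Fintype.card {w // w ≠ v} = m - 1 := by simp [hm]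
  have hcard' : Fintype.card {w : Unit ⊕ (Fin p × Fin (r₁ - 1)) // w ≠ .inl ()} = m - 1 := by
    simp [Fintype.card_congr subtypeNeInlUnitEquiv, hmp]
  have : Nontrivial W := Fintype.one_lt_card_iff_nontrivial.mp (by omega)
  have : Nontrivial (Unit ⊕ (Fin p × Fin (r₁ - 1))) :=
    nontrivial_of_ne (.inl ()) (.inr (⟨0, by omega⟩, ⟨0, by omega⟩)) Sum.inl_ne_inr
  have hreg' : IsReg (delVert (sgJoin ⊤ Gp) (.inl ())) r₁ :=
    (isReg_cycleGraph_boxProd_top hp hr₁).of_iso (delVertSgJoinIso Gp).symm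
  have hγδ' : ∀ x : ℝ, (x - (2 * r₁ + 1)) * (x - Fintype.card {w // w ≠ v})
      - Fintype.card {w // w ≠ v} = (x - γ) * (x - δ) := by
    rw [hcard, Nat.cast_sub (by omega), Nat.cast_one]
    exact hγδ
  rw [qSpec_pocketGraph F f hdeg hreg, qSpec_eq_cons_cons hdeg hreg hγδ',
    qSpec_pocketGraph F f (sgJoin_adj_inl_of_ne Gp) hreg', hcard', ← hcard,
    roots_charpoly_qMat_add_one_of_iso (delVertSgJoinIso Gp),
    Multiset.map_erase _ (add_left_injective 1), Multiset.erase_cons_head,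
    Multiset.erase_cons_head, add_tsub_cancel_right, add_comm]

/-- Corollary 3.8. -/
theorem signlessLap_spec_pocketGraph_vs_cycleCompleteModel
    {V W : Type*} [Fintype V] [DecidableEq V] [Fintype W] [DecidableEq W]
    (m k p r₁ : ℕ) (hm : Fintype.card W = m) (hp : 3 ≤ p) (hr₁ : 2 ≤ r₁)
    (hmp : m - 1 = p * (r₁ - 1))
    (F : SimpleGraph V) (H : SimpleGraph W) (v : W)
    (hdeg : ∀ w : W, w ≠ v → H.Adj v w)
    (hreg : IsReg (delVert H v) r₁)
    (f : Fin k ↪ V)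
    (γ δ : ℝ)
    (hγδ : ∀ x : ℝ,
      (x - (2 * (r₁ : ℝ) + 1)) * (x - ((m : ℝ) - 1)) - ((m : ℝ) - 1) = (x - γ) * (x - δ)) :
    qSpec (pocketGraph F H v f)
      = k • (((qSpec H).erase γ).erase δ)
        + (qSpec (pocketGraph F
              (sgJoin (⊤ : SimpleGraph Unit)
                ((SimpleGraph.cycleGraph p).boxProd (⊤ : SimpleGraph (Fin (r₁ - 1)))))
              (Sum.inl ()) f)
            - k • (((qSpec ((SimpleGraph.cycleGraph p).boxProd
                (⊤ : SimpleGraph (Fin (r₁ - 1))))).erase (2 * (r₁ : ℝ))).map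
                  fun q => q + 1)) :=
  signlessLap_spec_pocketGraph_vs_cycleCompleteModel_general m k p r₁ hm hp hr₁ hmp F H v hdeg hreg
    f γ δ hγδ
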